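/- arXiv:1003.5238 — 2 statements merged into one kernel-verified Lean document; each statement's English description precedes it below -/
import Mathlib

section
/- If the splitting function φ : ℝ^n × ℝ^n → ℝ^n satisfies φ(x,x) = f(x) and the Lipschitz condition ‖φ(x,y) − φ(x̃,ỹ)‖ ≤ μ‖x−x̃‖ + η‖y−ỹ‖, and x^k are the waveform relaxation iterates on [0,T] (solutions of ẋ^{k+1} = φ(x^{k+1}, x^k) with x^{k+1}(0) = x₀), with x̄ the exact solution of ẋ = f(x), x̄(0) = x₀, then the error E_k = x^k − x̄ satisfies sup_{t∈[0,T]} ‖E_k(t)‖ ≤ (C^k η^k T^k / k!) · sup_{t∈[0,T]} ‖E_0(t)‖, where C = e^{μT}. -/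
/-!
Subtracting the exact equation from the iteration and using `φ(x̄, x̄) = f(x̄)`, the errors satisfy
`‖E_{k+1}'‖ ≤ μ ‖E_{k+1}‖ + η ‖E_k‖` with `E_{k+1}(0) = 0`. A Grönwall comparison with the
supersolution `D t^{k+1} e^{μt} / (k+1)` turns a bound `‖E_k(t)‖ ≤ c t^k` into
`‖E_{k+1}(t)‖ ≤ e^{μT} η c t^{k+1} / (k+1)`, so by induction
`‖E_k(t)‖ ≤ (e^{μT} η t)^k / k! · sup ‖E_0‖`.
-/

open Set

section

variable {E : Type*} [NormedAddCommGroup E] [NormedSpace ℝ E]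

theorem norm_le_of_norm_deriv_right_le_of_supersolution {g g' : ℝ → E} {B B' F : ℝ → ℝ}
    {a b μ : ℝ} (hg : ContinuousOn g (Icc a b))
    (hg' : ∀ t ∈ Ico a b, HasDerivWithinAt g (g' t) (Ici t) t)
    (hB : ∀ t, HasDerivAt B (B' t) t) (ha : ‖g a‖ ≤ B a)
    (hbound : ∀ t ∈ Ico a b, ‖g' t‖ ≤ μ * ‖g t‖ + F t)
    (hsuper : ∀ t ∈ Ico a b, μ * B t + F t ≤ B' t) :
    ∀ t ∈ Icc a b, ‖g t‖ ≤ B t := by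
  intro t ht
  refine le_of_forall_pos_le_add fun δ hδ => ?_
  -- Fence with the strict supersolution `B + ε e^{(μ+1)(s-a)}` and let `ε → 0`.
  set ε := δ / Real.exp ((μ + 1) * (t - a))
  have hε : 0 < ε := by positivity
  have hexp : ∀ s, HasDerivAt (fun s => ε * Real.exp ((μ + 1) * (s - a)))
      (ε * (Real.exp ((μ + 1) * (s - a)) * (μ + 1))) s := fun s => by
    simpa using ((((hasDerivAt_id s).sub_const a).const_mul (μ + 1)).exp).const_mul ε
  have hfence : ‖g t‖ ≤ B t + ε * Real.exp ((μ + 1) * (t - a)) := by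
    refine image_norm_le_of_norm_deriv_right_lt_deriv_boundary hg hg'
      (by simpa using ha.trans (le_add_of_nonneg_right hε.le)) (fun s => (hB s).add (hexp s))
      (fun s hs hgs => ?_) ht
    have hpos : 0 < ε * Real.exp ((μ + 1) * (s - a)) := by positivity
    calc ‖g' s‖ ≤ μ * ‖g s‖ + F s := hbound s hs
      _ = μ * B s + F s + μ * (ε * Real.exp ((μ + 1) * (s - a))) := by
        rw [hgs, Pi.add_apply]; ring
      _ < B' s + ε * (Real.exp ((μ + 1) * (s - a)) * (μ + 1)) := by
        linarith [hsuper s hs]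
  simpa [ε, div_mul_cancel₀ _ (Real.exp_pos _).ne'] using hfence

theorem norm_le_of_norm_deriv_right_le_mul_add_pow {g g' : ℝ → E} {μ D T : ℝ} (k : ℕ)
    (hμ : 0 ≤ μ) (hD : 0 ≤ D) (hg : ContinuousOn g (Icc 0 T))
    (hg' : ∀ t ∈ Ico 0 T, HasDerivWithinAt g (g' t) (Ici t) t) (h0 : g 0 = 0)
    (hbound : ∀ t ∈ Ico 0 T, ‖g' t‖ ≤ μ * ‖g t‖ + D * t ^ k) :
    ∀ t ∈ Icc 0 T, ‖g t‖ ≤ D / (k + 1) * t ^ (k + 1) * Real.exp (μ * t) := by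
  set B : ℝ → ℝ := fun s => D / (k + 1) * s ^ (k + 1) * Real.exp (μ * s)
  have hB : ∀ s, HasDerivAt B (D * s ^ k * Real.exp (μ * s) + μ * B s) s := fun s => by
    refine (((hasDerivAt_pow (k + 1) s).const_mul (D / (k + 1))).mul
      ((hasDerivAt_id s).const_mul μ).exp).congr_deriv ?_
    simp only [B, id, mul_one, Nat.add_sub_cancel]
    field_simp
    push_cast
    ring
  refine norm_le_of_norm_deriv_right_le_of_supersolution hg hg' hB (by simp [h0]) hbound
    fun s hs => ?_
  have hforcing : D * s ^ k ≤ D * s ^ k * Real.exp (μ * s) :=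
    le_mul_of_one_le_right (by have := hs.1; positivity)
      (Real.one_le_exp (mul_nonneg hμ hs.1))
  linarith

theorem norm_le_pow_div_factorial_of_norm_deriv_le {e e' : ℕ → ℝ → E} {T μ η M : ℝ} (hμ : 0 ≤ μ) (hη : 0 ≤ η)
    (he0 : ∀ t ∈ Icc 0 T, ‖e 0 t‖ ≤ M) (hinit : ∀ k, e (k + 1) 0 = 0)
    (hderiv : ∀ k, ∀ t ∈ Icc 0 T, HasDerivAt (e (k + 1)) (e' k t) t)
    (hbound : ∀ k, ∀ t ∈ Icc 0 T, ‖e' k t‖ ≤ μ * ‖e (k + 1) t‖ + η * ‖e k t‖) :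
    ∀ k, ∀ t ∈ Icc 0 T,
      ‖e k t‖ ≤ (Real.exp (μ * T) * η * t) ^ k / k.factorial * M := by
  intro k
  induction k with
  | zero => simpa using he0
  | succ k ih =>
    intro t ht
    set C := Real.exp (μ * T)
    have hM : 0 ≤ M := (norm_nonneg _).trans (he0 0 ⟨le_rfl, ht.1.trans ht.2⟩)
    set D := η * (C * η) ^ k / k.factorial * M
    have hforcing : ∀ s ∈ Ico 0 T, ‖e' k s‖ ≤ μ * ‖e (k + 1) s‖ + D * s ^ k := fun s hs => by
      have hk := mul_le_mul_of_nonneg_left (ih s (Ico_subset_Icc_self hs)) hη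
      have : η * ((C * η * s) ^ k / k.factorial * M) = D * s ^ k := by
        simp only [D, mul_pow]; ring
      linarith [hbound k s (Ico_subset_Icc_self hs)]
    have hgronwall := norm_le_of_norm_deriv_right_le_mul_add_pow k hμ (by positivity)
      (fun s hs => (hderiv k s hs).continuousAt.continuousWithinAt)
      (fun s hs => (hderiv k s (Ico_subset_Icc_self hs)).hasDerivWithinAt) (hinit k)
      hforcing t ht
    have hexp : Real.exp (μ * t) ≤ C := Real.exp_le_exp.2 (mul_le_mul_of_nonneg_left ht.2 hμ)
    calc ‖e (k + 1) t‖ ≤ D / (k + 1) * t ^ (k + 1) * Real.exp (μ * t) := hgronwall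
      _ ≤ D / (k + 1) * t ^ (k + 1) * C := by have := ht.1; gcongr
      _ = (C * η * t) ^ (k + 1) / (k + 1).factorial * M := by
        simp only [D, Nat.factorial_succ, mul_pow]
        push_cast
        field_simp
        ring

end

theorem waveform_relaxation_error_bound_general
    (n : ℕ) (T μ η : ℝ) (hμ : 0 ≤ μ) (hη : 0 ≤ η)
    (f : EuclideanSpace ℝ (Fin n) → EuclideanSpace ℝ (Fin n))
    (φ : EuclideanSpace ℝ (Fin n) → EuclideanSpace ℝ (Fin n) → EuclideanSpace ℝ (Fin n))
    (hsplit : ∀ x, φ x x = f x)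
    (hLip : ∀ x x' y y', ‖φ x y - φ x' y'‖ ≤ μ * ‖x - x'‖ + η * ‖y - y'‖)
    (x₀ : EuclideanSpace ℝ (Fin n))
    (x : ℕ → ℝ → EuclideanSpace ℝ (Fin n))
    (xbar : ℝ → EuclideanSpace ℝ (Fin n))
    (hx0cont : ContinuousOn (x 0) (Icc 0 T))
    (hxinit : ∀ k, x (k + 1) 0 = x₀)
    (hxode : ∀ k, ∀ t ∈ Icc 0 T, HasDerivAt (x (k + 1)) (φ (x (k + 1) t) (x k t)) t)
    (hxbarinit : xbar 0 = x₀)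
    (hxbarode : ∀ t ∈ Icc 0 T, HasDerivAt xbar (f (xbar t)) t) :
    ∀ k : ℕ, ∀ t ∈ Icc 0 T,
      ‖x k t - xbar t‖ ≤
        (Real.exp (μ * T)) ^ k * η ^ k * T ^ k / (Nat.factorial k) *
          ⨆ s : Icc (0 : ℝ) T, ‖x 0 s - xbar s‖ := by
  intro k t ht
  have hxbarcont : ContinuousOn xbar (Icc 0 T) := fun s hs =>
    (hxbarode s hs).continuousAt.continuousWithinAt
  have hbdd : BddAbove (range fun s : Icc (0 : ℝ) T => ‖x 0 s - xbar s‖) :=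
    (isCompact_range (hx0cont.sub hxbarcont).norm.domRestrict).bddAbove
  have hE0 : ∀ s ∈ Icc 0 T, ‖x 0 s - xbar s‖ ≤ ⨆ s : Icc (0 : ℝ) T, ‖x 0 s - xbar s‖ :=
    fun s hs => le_ciSup hbdd ⟨s, hs⟩
  have hE := norm_le_pow_div_factorial_of_norm_deriv_le (e := fun k s => x k s - xbar s) hμ hη
    hE0 (fun k => by simp [hxinit, hxbarinit])
    (fun k s hs => (hxode k s hs).sub (hxbarode s hs))
    (fun k s _ => by simpa only [← hsplit (xbar s)] using hLip _ _ _ _) k t ht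
  have hM := (norm_nonneg _).trans (hE0 t ht)
  refine hE.trans ?_
  rw [mul_pow, mul_pow]
  gcongr
  exacts [ht.1, ht.2]

/-- Superlinear error bound for waveform relaxation (Proposition 2.1). -/
theorem waveform_relaxation_error_bound
    (n : ℕ) (T μ η : ℝ) (hT : 0 < T) (hμ : 0 ≤ μ) (hη : 0 ≤ η)
    (f : EuclideanSpace ℝ (Fin n) → EuclideanSpace ℝ (Fin n))
    (φ : EuclideanSpace ℝ (Fin n) → EuclideanSpace ℝ (Fin n) → EuclideanSpace ℝ (Fin n))
    (hsplit : ∀ x, φ x x = f x)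
    (hLip : ∀ x x' y y', ‖φ x y - φ x' y'‖ ≤ μ * ‖x - x'‖ + η * ‖y - y'‖)
    (x₀ : EuclideanSpace ℝ (Fin n))
    (x : ℕ → ℝ → EuclideanSpace ℝ (Fin n))
    (xbar : ℝ → EuclideanSpace ℝ (Fin n))
    (hx0cont : ContinuousOn (x 0) (Icc 0 T))
    (hx0init : x 0 0 = x₀)
    (hxinit : ∀ k, x (k + 1) 0 = x₀)
    (hxode : ∀ k, ∀ t ∈ Icc 0 T, HasDerivAt (x (k + 1)) (φ (x (k + 1) t) (x k t)) t)
    (hxbarinit : xbar 0 = x₀)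
    (hxbarode : ∀ t ∈ Icc 0 T, HasDerivAt xbar (f (xbar t)) t) :
    ∀ k : ℕ, ∀ t ∈ Icc 0 T,
      ‖x k t - xbar t‖ ≤
        (Real.exp (μ * T)) ^ k * η ^ k * T ^ k / (Nat.factorial k) *
          ⨆ s : Icc (0 : ℝ) T, ‖x 0 s - xbar s‖ :=
  waveform_relaxation_error_bound_general n T μ η hμ hη f φ hsplit hLip x₀ x xbar hx0cont hxinit
    hxode hxbarinit hxbarode
end

section
/- The m-th block of the fixed point (I − A)⁻¹ b, where A is the strictly block lower triangular matrix with (i,j) block C₁^{i−j−1}C₂ (i > j) and b has i-th block C₁^{i−1}(C₁+C₂)x₀, equals (C₁ + C₂)^m x₀ for m = 1,…,s. -/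
open Matrix Finset

/-!
The vector of explicit Euler iterates `vᵢ = (C₁ + C₂)^(i+1) x₀` solves `(I - A) v = b`: the
`i`-th block equation is the noncommutative telescoping identity
`(C₁ + C₂)^(i+1) = C₁^i (C₁ + C₂) + ∑_{j<i} C₁^(i-j-1) C₂ (C₁ + C₂)^(j+1)`.
Since `A` is strictly block lower triangular, `I - A` has determinant `1`, so `(I - A)⁻¹ b = v`.
-/

theorem add_pow_succ_eq_pow_mul_add_sum {R : Type*} [Ring R] (a b : R) (i : ℕ) :
    (a + b) ^ (i + 1) =
      a ^ i * (a + b) + ∑ j ∈ range i, a ^ (i - j - 1) * b * (a + b) ^ (j + 1) := by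
  -- telescope `f j = a ^ (i - j) * (a + b) ^ (j + 1)` from `f 0 = a ^ i * (a + b)` to `f i`
  have step : ∀ j ∈ range i,
      a ^ (i - (j + 1)) * (a + b) ^ (j + 1 + 1) - a ^ (i - j) * (a + b) ^ (j + 1) =
        a ^ (i - j - 1) * b * (a + b) ^ (j + 1) := by
    intro j hj
    obtain ⟨k, hk⟩ : ∃ k, i - j = k + 1 := ⟨i - j - 1, by grind⟩
    rw [show i - (j + 1) = k by omega, hk, show k + 1 - 1 = k by omega, pow_succ a k,
      mul_assoc, ← mul_sub, pow_succ' (a + b) (j + 1), ← sub_mul, add_sub_cancel_left, mul_assoc]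
  simpa [sum_congr rfl step] using
    eq_sum_range_sub (fun j ↦ a ^ (i - j) * (a + b) ^ (j + 1)) i

theorem det_one_sub_of_strictBlockTriangular {m α R : Type*} [Fintype m] [DecidableEq m]
    [CommRing R] [LinearOrder α] {M : Matrix m m R} {b : m → α}
    (hM : ∀ i j, b j ≤ b i → M i j = 0) :
    (1 - M).det = 1 := by
  have htri : (1 - M).BlockTriangular b :=
    blockTriangular_one.sub fun i j hij ↦ hM i j hij.le
  rw [htri.det]
  refine prod_eq_one fun k _ ↦ ?_
  have hblock : (1 - M).toSquareBlock b k = 1 := by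
    ext ⟨i, hi⟩ ⟨j, hj⟩
    simp [toSquareBlock_def, hM i j (hj.trans hi.symm).le, one_apply]
  rw [hblock, det_one]

theorem mulVec_prod_apply {ι α R : Type*} [Fintype ι] [Fintype α] [NonUnitalNonAssocSemiring R]
    (A : Matrix (ι × α) (ι × α) R) (v : ι × α → R) (i : ι) (a : α) :
    (A *ᵥ v) (i, a) = ∑ j, (of (fun a b ↦ A (i, a) (j, b)) *ᵥ fun b ↦ v (j, b)) a := by
  simp [mulVec, dotProduct, Fintype.sum_prod_type]

theorem Fin.sum_univ_ite_lt {M : Type*} [AddCommMonoid M] {s i : ℕ} (hi : i ≤ s) (f : ℕ → M) :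
    ∑ j : Fin s, (if (j : ℕ) < i then f j else 0) = ∑ j ∈ range i, f j := by
  rw [Fin.sum_univ_eq_sum_range (fun j ↦ if j < i then f j else 0), ← sum_filter]
  congr 1
  ext j
  simp only [mem_filter, mem_range]
  omega

section BlockToeplitz

variable {R : Type*} [Ring R] {n s : ℕ} {C₁ C₂ : Matrix (Fin n) (Fin n) R}
  {A : Matrix (Fin s × Fin n) (Fin s × Fin n) R}

theorem mulVec_apply_eq_sum_range
    (hA : ∀ i j : Fin s, ∀ a b : Fin n,
      A (i, a) (j, b) =
        if (j : ℕ) < (i : ℕ) then (C₁ ^ ((i : ℕ) - (j : ℕ) - 1) * C₂) a b else 0)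
    (w : ℕ → Fin n → R) (i : Fin s) (a : Fin n) :
    (A *ᵥ fun p ↦ w p.1 p.2) (i, a) = ∑ j ∈ range i, ((C₁ ^ (i - j - 1) * C₂) *ᵥ w j) a := by
  rw [mulVec_prod_apply,
    ← Fin.sum_univ_ite_lt i.isLt.le fun j ↦ ((C₁ ^ (i - j - 1) * C₂) *ᵥ w j) a]
  refine sum_congr rfl fun j _ ↦ ?_
  split_ifs with hji <;> simp [mulVec, dotProduct, hA, hji]

theorem one_sub_mulVec_pow_mulVec
    (hA : ∀ i j : Fin s, ∀ a b : Fin n,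
      A (i, a) (j, b) =
        if (j : ℕ) < (i : ℕ) then (C₁ ^ ((i : ℕ) - (j : ℕ) - 1) * C₂) a b else 0)
    (x₀ : Fin n → R) :
    (1 - A) *ᵥ (fun p ↦ (((C₁ + C₂) ^ ((p.1 : ℕ) + 1)) *ᵥ x₀) p.2) =
      fun p ↦ ((C₁ ^ (p.1 : ℕ) * (C₁ + C₂)) *ᵥ x₀) p.2 := by
  ext ⟨i, a⟩
  rw [sub_mulVec, one_mulVec, Pi.sub_apply,
    mulVec_apply_eq_sum_range hA (fun j ↦ ((C₁ + C₂) ^ (j + 1)) *ᵥ x₀),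
    add_pow_succ_eq_pow_mul_add_sum, add_mulVec, sum_mulVec]
  simp [mulVec_mulVec]

end BlockToeplitz

theorem explicit_euler_wr_fixed_point_blocks_general
    (n s : ℕ) (C₁ C₂ : Matrix (Fin n) (Fin n) ℝ) (x₀ : Fin n → ℝ)
    (A : Matrix (Fin s × Fin n) (Fin s × Fin n) ℝ)
    (hA : ∀ i j : Fin s, ∀ a b : Fin n,
      A (i, a) (j, b) =
        if (j : ℕ) < (i : ℕ) then (C₁ ^ ((i : ℕ) - (j : ℕ) - 1) * C₂) a b else 0)
    (bvec : Fin s × Fin n → ℝ)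
    (hb : ∀ i : Fin s, ∀ a : Fin n,
      bvec (i, a) = ((C₁ ^ (i : ℕ) * (C₁ + C₂)).mulVec x₀) a) :
    ∀ i : Fin s, ∀ a : Fin n,
      ((1 - A)⁻¹.mulVec bvec) (i, a) = (((C₁ + C₂) ^ ((i : ℕ) + 1)).mulVec x₀) a := by
  have hdet : (1 - A).det = 1 :=
    det_one_sub_of_strictBlockTriangular (b := fun p ↦ OrderDual.toDual p.1)
      fun ⟨i, a⟩ ⟨j, b⟩ hij ↦ by simp [hA, not_lt.mpr (OrderDual.toDual_le_toDual.mp hij)]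
  have := (1 - A).invertibleOfIsUnitDet (hdet ▸ isUnit_one)
  have hbvec : bvec = fun p ↦ ((C₁ ^ (p.1 : ℕ) * (C₁ + C₂)) *ᵥ x₀) p.2 :=
    funext fun p ↦ hb p.1 p.2
  intro i a
  rw [hbvec, inv_mulVec_eq_vec (one_sub_mulVec_pow_mulVec hA x₀).symm]

/-- The `m`-th block of the fixed point `(I - A)⁻¹ b` of explicit Euler waveform
relaxation equals `(C₁ + C₂)^m x₀`, the explicit Euler solution of the undecomposed
system. -/
theorem explicit_euler_wr_fixed_point_blocks
    (n s : ℕ) (hs : 1 ≤ s) (C₁ C₂ : Matrix (Fin n) (Fin n) ℝ) (x₀ : Fin n → ℝ)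
    (A : Matrix (Fin s × Fin n) (Fin s × Fin n) ℝ)
    (hA : ∀ i j : Fin s, ∀ a b : Fin n,
      A (i, a) (j, b) =
        if (j : ℕ) < (i : ℕ) then (C₁ ^ ((i : ℕ) - (j : ℕ) - 1) * C₂) a b else 0)
    (bvec : Fin s × Fin n → ℝ)
    (hb : ∀ i : Fin s, ∀ a : Fin n,
      bvec (i, a) = ((C₁ ^ (i : ℕ) * (C₁ + C₂)).mulVec x₀) a) :
    ∀ i : Fin s, ∀ a : Fin n,
      ((1 - A)⁻¹.mulVec bvec) (i, a) = (((C₁ + C₂) ^ ((i : ℕ) + 1)).mulVec x₀) a :=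
  explicit_euler_wr_fixed_point_blocks_general n s C₁ C₂ x₀ A hA bvec hb
end
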